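/- arXiv:1811.00955 — 2 statements merged into one kernel-verified Lean document; each statement's English description precedes it below -/
import Mathlib

section
/- Let G=(V,E,r,w) be a finite weighted multigraph, let τ>0, and let x be a feasible solution of the configuration LP of G for parameter τ. Then there exists an orientation t of G such that for every edge e∈E one has ∑_{C∈𝒞(t(e),τ) : e∈C} x_{t(e),C} ≥ 1/2, and every such orientation has maximum weighted in-degree at most 2τ, i.e., ∑_{e : t(e)=v} w(e) ≤ 2τ for every v∈V. -/
open Finset
open scoped Classical

/-- `C` is a configuration for vertex `v` and makespan `τ`: a set of edges incident
to `v` (i.e. `v ∈ r e` for each `e ∈ C`) of total weight at most `τ`. -/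
def IsConfig {V E : Type*} (r : E → Sym2 V) (w : E → ℝ) (τ : ℝ) (v : V) (C : Finset E) : Prop :=
  (∀ e ∈ C, v ∈ r e) ∧ ∑ e ∈ C, w e ≤ τ

/-- Feasibility of the configuration LP of the weighted multigraph `(V, E, r, w)`
for the parameter `τ`. -/
def ConfigLPFeasible {V E : Type*} [Fintype V] [Fintype E]
    (r : E → Sym2 V) (w : E → ℝ) (τ : ℝ) : Prop :=
  ∃ x : V → Finset E → ℝ,
    (∀ v C, 0 ≤ x v C) ∧
    (∀ v : V, ∑ C ∈ Finset.univ.filter (fun C => IsConfig r w τ v C), x v C ≤ 1) ∧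
    (∀ e : E, 1 ≤ ∑ v ∈ Finset.univ.filter (fun v : V => v ∈ r e),
        ∑ C ∈ Finset.univ.filter (fun C => IsConfig r w τ v C ∧ e ∈ C), x v C)

/-- The weighted in-degree of vertex `v` under the orientation `t`. -/
noncomputable def inDeg {V E : Type*} [Fintype E] (w : E → ℝ) (t : E → V) (v : V) : ℝ :=
  ∑ e ∈ Finset.univ.filter (fun e => t e = v), w e


/-- Given a feasible solution `x` of the configuration LP for parameter `τ > 0`, there exists
an orientation `t` such that every edge `e` has fractional support at least `1/2` at its target,
i.e. `∑_{C ∈ 𝒞(t(e),τ), e ∈ C} x_{t(e),C} ≥ 1/2`; and every such orientation has maximum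
weighted in-degree at most `2τ`. -/
theorem configLP_rounding_two_approx
    {V E : Type*} [Fintype V] [Fintype E]
    (r : E → Sym2 V) (w : E → ℝ) (hw : ∀ e, 0 < w e)
    (τ : ℝ) (hτ : 0 < τ)
    (x : V → Finset E → ℝ)
    (hx0 : ∀ v C, 0 ≤ x v C)
    (hx1 : ∀ v : V, ∑ C ∈ Finset.univ.filter (fun C => IsConfig r w τ v C), x v C ≤ 1)
    (hx2 : ∀ e : E, 1 ≤ ∑ v ∈ Finset.univ.filter (fun v : V => v ∈ r e),
        ∑ C ∈ Finset.univ.filter (fun C => IsConfig r w τ v C ∧ e ∈ C), x v C) :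
    (∃ t : E → V, (∀ e, t e ∈ r e) ∧
        ∀ e : E, (1 : ℝ) / 2 ≤
          ∑ C ∈ Finset.univ.filter (fun C => IsConfig r w τ (t e) C ∧ e ∈ C), x (t e) C) ∧
    (∀ t : E → V, (∀ e, t e ∈ r e) →
        (∀ e : E, (1 : ℝ) / 2 ≤
          ∑ C ∈ Finset.univ.filter (fun C => IsConfig r w τ (t e) C ∧ e ∈ C), x (t e) C) →
        ∀ v : V, inDeg w t v ≤ 2 * τ) := by
  constructor
  · have key : ∀ e : E, ∃ v, v ∈ r e ∧ (1:ℝ)/2 ≤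
        ∑ C ∈ Finset.univ.filter (fun C => IsConfig r w τ v C ∧ e ∈ C), x v C := by
      intro e
      by_contra h
      push_neg at h
      set S := Finset.univ.filter (fun v : V => v ∈ r e) with hS
      have hmem : ∀ v ∈ S, v ∈ r e := by
        intro v hv; exact (Finset.mem_filter.mp hv).2
      obtain ⟨⟨a, b⟩, hab⟩ := Quot.exists_rep (r e)
      have hsub : S ⊆ {a, b} := by
        intro v hv
        have hv' := hmem v hv
        rw [← hab] at hv'
        rcases Sym2.mem_iff.mp hv' with h1 | h1 <;> simp [h1]
      have hcard : S.card ≤ 2 := by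
        calc S.card ≤ ({a, b} : Finset V).card := Finset.card_le_card hsub
          _ ≤ 2 := Finset.card_insert_le a {b} |>.trans (by simp)
      have hne : S.Nonempty := by
        by_contra hne
        rw [Finset.not_nonempty_iff_eq_empty] at hne
        have := hx2 e
        rw [← hS, hne] at this
        simp at this
        linarith
      have hlt : ∑ v ∈ S, ∑ C ∈ Finset.univ.filter
          (fun C => IsConfig r w τ v C ∧ e ∈ C), x v C < ∑ v ∈ S, (1:ℝ)/2 := by
        apply Finset.sum_lt_sum_of_nonempty hne
        intro v hv
        exact h v (hmem v hv)
      have hle : ∑ v ∈ S, (1:ℝ)/2 ≤ 1 := by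
        rw [Finset.sum_const]
        have : (S.card : ℝ) ≤ 2 := by exact_mod_cast hcard
        rw [nsmul_eq_mul]
        linarith
      have := hx2 e
      rw [← hS] at this
      linarith
    choose t ht1 ht2 using key
    exact ⟨t, ht1, ht2⟩
  · intro t ht hhalf v
    unfold inDeg
    set F := Finset.univ.filter (fun e => t e = v) with hF
    set CS := Finset.univ.filter (fun C : Finset E => IsConfig r w τ v C) with hCS
    have hfe : ∀ e : E, Finset.univ.filter (fun C => IsConfig r w τ v C ∧ e ∈ C)
        = CS.filter (fun C => e ∈ C) := by
      intro e
      rw [hCS, Finset.filter_filter]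
    have step1 : ∑ e ∈ F, w e ≤ ∑ e ∈ F, ∑ C ∈ CS.filter (fun C => e ∈ C), 2 * w e * x v C := by
      apply Finset.sum_le_sum
      intro e he
      have hte : t e = v := (Finset.mem_filter.mp he).2
      have h2 := hhalf e
      rw [hte, hfe e] at h2
      have : w e * 1 ≤ w e * (2 * ∑ C ∈ CS.filter (fun C => e ∈ C), x v C) := by
        apply mul_le_mul_of_nonneg_left _ (hw e).le
        linarith
      calc w e = w e * 1 := by ring
        _ ≤ w e * (2 * ∑ C ∈ CS.filter (fun C => e ∈ C), x v C) := this
        _ = ∑ C ∈ CS.filter (fun C => e ∈ C), 2 * w e * x v C := by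
            rw [Finset.mul_sum, Finset.mul_sum]
            apply Finset.sum_congr rfl
            intros; ring
    have step2 : ∑ e ∈ F, ∑ C ∈ CS.filter (fun C => e ∈ C), 2 * w e * x v C
        = ∑ C ∈ CS, 2 * x v C * ∑ e ∈ F.filter (fun e => e ∈ C), w e := by
      have : ∀ e ∈ F, ∑ C ∈ CS.filter (fun C => e ∈ C), 2 * w e * x v C
          = ∑ C ∈ CS, if e ∈ C then 2 * w e * x v C else 0 := by
        intro e _
        rw [Finset.sum_filter]
      rw [Finset.sum_congr rfl this, Finset.sum_comm]
      apply Finset.sum_congr rfl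
      intro C _
      rw [← Finset.sum_filter, Finset.mul_sum]
      apply Finset.sum_congr rfl
      intros; ring
    have step3 : ∑ C ∈ CS, 2 * x v C * ∑ e ∈ F.filter (fun e => e ∈ C), w e
        ≤ ∑ C ∈ CS, 2 * τ * x v C := by
      apply Finset.sum_le_sum
      intro C hC
      have hCconf : IsConfig r w τ v C := (Finset.mem_filter.mp hC).2
      have hsub : F.filter (fun e => e ∈ C) ⊆ C := by
        intro e he
        exact (Finset.mem_filter.mp he).2
      have hwle : ∑ e ∈ F.filter (fun e => e ∈ C), w e ≤ ∑ e ∈ C, w e :=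
        Finset.sum_le_sum_of_subset_of_nonneg hsub (fun e _ _ => (hw e).le)
      have hwle2 : ∑ e ∈ F.filter (fun e => e ∈ C), w e ≤ τ := hwle.trans hCconf.2
      have := mul_le_mul_of_nonneg_left hwle2 (mul_nonneg (by norm_num : (0:ℝ) ≤ 2) (hx0 v C))
      calc 2 * x v C * ∑ e ∈ F.filter (fun e => e ∈ C), w e ≤ 2 * x v C * τ := this
        _ = 2 * τ * x v C := by ring
    have step4 : ∑ C ∈ CS, 2 * τ * x v C ≤ 2 * τ := by
      rw [← Finset.mul_sum]
      have := hx1 v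
      rw [← hCS] at this
      nlinarith [Finset.sum_nonneg (fun C (_ : C ∈ CS) => hx0 v C)]
    linarith
end

section
/- Let G=(V,E,r,w) be a finite weighted multigraph whose configuration LP is feasible for parameter τ=1. Call an edge e big if w(e) > 1/2. Then there exists an orientation t of G such that every vertex has at most two incoming big edges, i.e., |{e∈E : t(e)=v and w(e)>1/2}| ≤ 2 for every v∈V. -/
open Finset
open scoped Classical

/-- If the configuration LP is feasible for `τ = 1`, then there is an orientation in which
every vertex has at most two incoming big edges (edges of weight greater than `1/2`). -/
theorem configLP_orientation_at_most_two_big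
    {V E : Type*} [Fintype V] [Fintype E]
    (r : E → Sym2 V) (w : E → ℝ) (hw : ∀ e, 0 < w e)
    (hfeas : ConfigLPFeasible r w 1) :
    ∃ t : E → V, (∀ e, t e ∈ r e) ∧
      ∀ v : V, (Finset.univ.filter (fun e : E => t e = v ∧ 1 / 2 < w e)).card ≤ 2 := by
  obtain ⟨x, hx0, hx1, hx2⟩ := hfeas
  set y : V → E → ℝ := fun v e =>
    ∑ C ∈ Finset.univ.filter (fun C => IsConfig r w 1 v C ∧ e ∈ C), x v C with hy
  have hy0 : ∀ v e, 0 ≤ y v e := fun v e => Finset.sum_nonneg (fun C _ => hx0 v C)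
  -- every edge has an endpoint with y ≥ 1/2
  have hB : ∀ e, ∃ v, v ∈ r e ∧ (1:ℝ)/2 ≤ y v e := by
    intro e
    by_contra hcon
    push_neg at hcon
    have h2 := hx2 e
    set S := Finset.univ.filter (fun v : V => v ∈ r e) with hS
    have hsum : (1:ℝ) ≤ ∑ v ∈ S, y v e := h2
    obtain ⟨⟨a, b⟩, hab⟩ := Quot.exists_rep (r e)
    have hsub : S ⊆ {a, b} := by
      intro v hv
      simp only [hS, Finset.mem_filter] at hv
      have : v ∈ s(a, b) := by rw [show s(a,b) = r e from hab]; exact hv.2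
      rw [Sym2.mem_iff] at this
      simp [this]
    have hcard : S.card ≤ 2 := le_trans (Finset.card_le_card hsub) (Finset.card_insert_le _ _ |>.trans (by simp))
    have hne : S.Nonempty := by
      by_contra hemp
      rw [Finset.not_nonempty_iff_eq_empty] at hemp
      rw [hemp] at hsum
      simp at hsum
      linarith
    have hlt : ∑ v ∈ S, y v e < ∑ v ∈ S, (1:ℝ)/2 :=
      Finset.sum_lt_sum_of_nonempty hne (fun v hv => by
        have := hcon v (by simpa [hS] using (Finset.mem_filter.mp hv).2)
        exact this)
    have : ∑ v ∈ S, (1:ℝ)/2 = (S.card : ℝ) * (1/2) := by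
      rw [Finset.sum_const, nsmul_eq_mul]
    have hle : (S.card : ℝ) * (1/2) ≤ 1 := by
      have : (S.card : ℝ) ≤ 2 := by exact_mod_cast hcard
      linarith
    linarith
  refine ⟨fun e => (hB e).choose, fun e => (hB e).choose_spec.1, ?_⟩
  intro v
  set t : E → V := fun e => (hB e).choose with ht
  set F := Finset.univ.filter (fun e : E => t e = v ∧ 1 / 2 < w e) with hF
  set Bv := Finset.univ.filter (fun e : E => v ∈ r e ∧ 1 / 2 < w e) with hBv
  have hFB : F ⊆ Bv := by
    intro e he
    simp only [hF, Finset.mem_filter] at he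
    simp only [hBv, Finset.mem_filter]
    exact ⟨he.1, he.2.1 ▸ (hB e).choose_spec.1, he.2.2⟩
  -- key: ∑_{e ∈ Bv} y v e ≤ 1
  have hkey : ∑ e ∈ Bv, y v e ≤ 1 := by
    calc ∑ e ∈ Bv, y v e
        = ∑ e ∈ Bv, ∑ C ∈ Finset.univ.filter (fun C => IsConfig r w 1 v C),
            (if e ∈ C then x v C else 0) := by
          refine Finset.sum_congr rfl (fun e _ => ?_)
          simp only [hy]
          rw [← Finset.filter_filter, Finset.sum_filter]
      _ = ∑ C ∈ Finset.univ.filter (fun C => IsConfig r w 1 v C),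
            ∑ e ∈ Bv, (if e ∈ C then x v C else 0) := Finset.sum_comm
      _ = ∑ C ∈ Finset.univ.filter (fun C => IsConfig r w 1 v C),
            ((Bv.filter (fun e => e ∈ C)).card : ℝ) * x v C := by
          refine Finset.sum_congr rfl (fun C _ => ?_)
          rw [← Finset.sum_filter, Finset.sum_const, nsmul_eq_mul]
      _ ≤ ∑ C ∈ Finset.univ.filter (fun C => IsConfig r w 1 v C), x v C := by
          refine Finset.sum_le_sum (fun C hC => ?_)
          have hC' : IsConfig r w 1 v C := (Finset.mem_filter.mp hC).2
          have hcard1 : (Bv.filter (fun e => e ∈ C)).card ≤ 1 := by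
            rw [Finset.card_le_one]
            intro e1 h1 e2 h2
            by_contra hne
            simp only [hBv, Finset.mem_filter, Finset.mem_univ, true_and] at h1 h2
            have hsub : ({e1, e2} : Finset E) ⊆ C := by
              intro z hz
              simp only [Finset.mem_insert, Finset.mem_singleton] at hz
              rcases hz with rfl | rfl
              exacts [h1.2, h2.2]
            have hsum2 : w e1 + w e2 ≤ ∑ e ∈ C, w e := by
              rw [← Finset.sum_pair hne]
              exact Finset.sum_le_sum_of_subset_of_nonneg hsub (fun z _ _ => (hw z).le)
            have hb1 := h1.1.2
            have hb2 := h2.1.2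
            have := hC'.2
            linarith
          have hcR : ((Bv.filter (fun e => e ∈ C)).card : ℝ) ≤ 1 := by exact_mod_cast hcard1
          calc ((Bv.filter (fun e => e ∈ C)).card : ℝ) * x v C
              ≤ 1 * x v C := mul_le_mul_of_nonneg_right hcR (hx0 v C)
            _ = x v C := one_mul _
      _ ≤ 1 := hx1 v
  have hhalf : (F.card : ℝ) * (1/2) ≤ ∑ e ∈ F, y v e := by
    calc (F.card : ℝ) * (1/2) = ∑ _e ∈ F, (1:ℝ)/2 := by rw [Finset.sum_const, nsmul_eq_mul]
    _ ≤ ∑ e ∈ F, y v e := Finset.sum_le_sum (fun e he => by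
        have h1 := (hB e).choose_spec.2
        have h2 : t e = v := (Finset.mem_filter.mp he).2.1
        rw [← h2]; exact h1)
  have hFle : ∑ e ∈ F, y v e ≤ ∑ e ∈ Bv, y v e :=
    Finset.sum_le_sum_of_subset_of_nonneg hFB (fun e _ _ => hy0 v e)
  have : (F.card : ℝ) ≤ 2 := by linarith
  exact_mod_cast this
end
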